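/- arXiv:2510.01901 — 2 statements merged into one kernel-verified Lean document; each statement's English description precedes it below -/
import Mathlib

section
/- Let K = (R_{0:n-1}, K_{0:n-1}) be a knotset compatible with a Feynman–Kac model M = (M_{0:n}, G_{0:n}). Then the knot-model K ∗ M = (M*_{0:n}, G*_{0:n}) satisfies M*_0 = R_0 and G*_0 = K_0(G_0); M*_p = K_{p-1}^{G_{p-1}} R_p and G*_p = K_p(G_p) for p ∈ {1,…,n−1}; and M*_n = K_{n-1}^{G_{n-1}} M_n and G*_n = G_n. -/
open MeasureTheory
open scoped ENNReal

noncomputable section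

namespace KnotsPaper

variable {α β γ : Type*}

/-- Composition of measure-valued maps ("kernels"): `(L K)(x,·) = ∫ L(x,dy) K(y,·)`. -/
def kcomp [MeasurableSpace β] [MeasurableSpace γ]
    (L : α → Measure β) (K : β → Measure γ) : α → Measure γ :=
  fun x => (L x).bind K

/-- A kernel applied to a nonnegative function: `K(H)(x) = ∫ H(y) K(x,dy)`. -/
def kap [MeasurableSpace β] (K : α → Measure β) (H : β → ℝ≥0∞) : α → ℝ≥0∞ :=
  fun x => ∫⁻ y, H y ∂(K x)

/-- Twisted kernel `K^H`: `K^H(x,dy) = K(x,dy)H(y)/K(H)(x)` when `K(H)(x) > 0`,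
and `K(x,·)` when `K(H)(x) = 0`. -/
def twist [MeasurableSpace β] (K : α → Measure β) (H : β → ℝ≥0∞) : α → Measure β :=
  fun x => if kap K H x = 0 then K x else (kap K H x)⁻¹ • (K x).withDensity H

/-- Markov kernel property for a measure-valued map. -/
def IsKernel [MeasurableSpace α] [MeasurableSpace β] (K : α → Measure β) : Prop :=
  Measurable K ∧ ∀ x, IsProbabilityMeasure (K x)

/-- Conditional variance `Var_K(f)(x) = K(f²)(x) − (K(f)(x))²` (real-valued). -/
def varK [MeasurableSpace β] (K : α → Measure β) (f : β → ℝ) : α → ℝ :=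
  fun x => (∫ y, (f y) ^ 2 ∂(K x)) - (∫ y, f y ∂(K x)) ^ 2

/-- Conditional variance `Var_K(f)(x) = K(f²)(x) − (K(f)(x))²` in `ℝ≥0∞`. -/
def varK' [MeasurableSpace β] (K : α → Measure β) (f : β → ℝ) : α → ℝ≥0∞ :=
  fun x => (∫⁻ y, ENNReal.ofReal ((f y) ^ 2) ∂(K x)) - ENNReal.ofReal ((∫ y, f y ∂(K x)) ^ 2)

/-- Conditional covariance `Cov_K(f,g)(x) = K(f·g)(x) − K(f)(x)·K(g)(x)`. -/
def covK [MeasurableSpace β] (K : α → Measure β) (f g : β → ℝ) : α → ℝ :=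
  fun x => (∫ y, f y * g y ∂(K x)) - (∫ y, f y ∂(K x)) * (∫ y, g y ∂(K x))

/-- Tensor product of kernels: `(U ⊗ W)(x, d[y,z]) = U(x,dy) W(y,dz)`. -/
def ktens [MeasurableSpace β] [MeasurableSpace γ]
    (U : α → Measure β) (W : β → Measure γ) : α → Measure (β × γ) :=
  fun x => (U x).bind (fun y => (W y).map (fun z => (y, z)))

variable {E : Type*} [MeasurableSpace E]

/-- A discrete-time (updated) Feynman--Kac model with horizon `n`:
an initial distribution `init`, Markov kernels `M p` (used for `p ∈ [1,n]`)
and potential functions `G p` (used for `p ∈ [0,n]`). -/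
structure FK (E : Type*) [MeasurableSpace E] (n : ℕ) where
  init : Measure E
  M : ℕ → E → Measure E
  G : ℕ → E → ℝ≥0∞

namespace FK

variable {n : ℕ}

/-- Regularity of a Feynman--Kac model: the initial distribution is a probability
measure, the `M p` are Markov kernels, and the potentials `G p` are measurable,
`[0,∞)`-valued and integrable with respect to `M p (x, ·)` for all `x` (resp. `init`). -/
def Reg (𝓜 : FK E n) : Prop :=
  IsProbabilityMeasure 𝓜.init ∧
  (∀ p, 1 ≤ p → p ≤ n → IsKernel (𝓜.M p)) ∧
  (∀ p, p ≤ n → Measurable (𝓜.G p)) ∧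
  (∀ p x, 𝓜.G p x ≠ ∞) ∧
  (∫⁻ x, 𝓜.G 0 x ∂𝓜.init) ≠ ∞ ∧
  (∀ p x, 1 ≤ p → p ≤ n → kap (𝓜.M p) (𝓜.G p) x ≠ ∞)

/-- Predictive measures `γ_p`. -/
def gamma (𝓜 : FK E n) : ℕ → Measure E
  | 0 => 𝓜.init
  | p + 1 => ((gamma 𝓜 p).withDensity (𝓜.G p)).bind (𝓜.M (p + 1))

/-- Updated measures `γ̂_p`. -/
def gammaHat (𝓜 : FK E n) (p : ℕ) : Measure E := (𝓜.gamma p).withDensity (𝓜.G p)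

/-- Normalised predictive measures `η_p`. -/
def eta (𝓜 : FK E n) (p : ℕ) : Measure E := ((𝓜.gamma p) Set.univ)⁻¹ • 𝓜.gamma p

/-- Normalised updated measures `η̂_p`. -/
def etaHat (𝓜 : FK E n) (p : ℕ) : Measure E := ((𝓜.gammaHat p) Set.univ)⁻¹ • 𝓜.gammaHat p

/-- The kernels `Q_{p,n}`: `Q_{n,n} = Id` and `Q_{p,n} = Q_{p+1} Q_{p+1,n}` where
`Q_{p+1}(x,dy) = G_p(x) M_{p+1}(x,dy)`. -/
def Qto (𝓜 : FK E n) (p : ℕ) : E → Measure E :=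
  if _h : n ≤ p then fun x => Measure.dirac x
  else fun x => ((𝓜.G p x) • (𝓜.M (p + 1) x)).bind (Qto 𝓜 (p + 1))
termination_by n - p
decreasing_by omega

/-- `Q_{p,n}(φ)`. -/
def Qf (𝓜 : FK E n) (p : ℕ) (φ : E → ℝ) : E → ℝ := fun x => ∫ y, φ y ∂(𝓜.Qto p x)

/-- The asymptotic variance terms
`v_{p,n}(φ) = γ_p(1) γ_p(Q_{p,n}(φ)²)/γ_n(1)² − η_n(φ)²` (valued in `[0,∞]`). -/
def v (𝓜 : FK E n) (p : ℕ) (φ : E → ℝ) : ℝ≥0∞ :=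
  𝓜.gamma p Set.univ * (∫⁻ x, ENNReal.ofReal ((𝓜.Qf p φ x) ^ 2) ∂(𝓜.gamma p))
      / (𝓜.gamma n Set.univ) ^ 2
    - ENNReal.ofReal ((∫ x, φ x ∂(𝓜.eta n)) ^ 2)

/-- The (predictive) asymptotic variance map `σ²(φ) = Σ_{p=0}^n v_{p,n}(φ)`. -/
def var (𝓜 : FK E n) (φ : E → ℝ) : ℝ≥0∞ := ∑ p ∈ Finset.range (n + 1), 𝓜.v p φ

/-- The updated asymptotic variance terms `v̂_{p,n}(φ) = v_{p,n}(G_n·φ)/η_n(G_n)²`. -/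
def vhat (𝓜 : FK E n) (p : ℕ) (φ : E → ℝ) : ℝ≥0∞ :=
  𝓜.v p (fun x => (𝓜.G n x).toReal * φ x)
    / ENNReal.ofReal ((∫ x, (𝓜.G n x).toReal ∂(𝓜.eta n)) ^ 2)

/-- The updated asymptotic variance map `σ̂²(φ)`. -/
def varHat (𝓜 : FK E n) (φ : E → ℝ) : ℝ≥0∞ := ∑ p ∈ Finset.range (n + 1), 𝓜.vhat p φ

/-- The class `F(M)` of relevant test functions for the predictive measure. -/
def memF (𝓜 : FK E n) (φ : E → ℝ) : Prop := Integrable φ (𝓜.eta n) ∧ 𝓜.var φ ≠ ∞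

/-- The class `F̂(M)` of relevant test functions for the updated measure. -/
def memFhat (𝓜 : FK E n) (φ : E → ℝ) : Prop := Integrable φ (𝓜.etaHat n) ∧ 𝓜.varHat φ ≠ ∞

end FK

/-- Application of a single knot `(t,R,K)` with `1 ≤ t < n` to a model:
`M*_t = R`, `G*_t = K(G_t)`, `M*_{t+1} = K^{G_t} M_{t+1}`, everything else unchanged. -/
def knotApply {n : ℕ} (t : ℕ) (R K : E → Measure E) (𝓜 : FK E n) : FK E n where
  init := 𝓜.init
  M := fun p =>
    if p = t then R
    else if p = t + 1 then kcomp (twist K (𝓜.G t)) (𝓜.M (t + 1))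
    else 𝓜.M p
  G := fun p => if p = t then kap K (𝓜.G t) else 𝓜.G p

/-- Application of a knot `(0,R₀,K)` at time `0` (where `R₀` is a probability measure):
`M*_0 = R₀`, `G*_0 = K(G_0)`, `M*_1 = K^{G_0} M_1`, everything else unchanged. -/
def knotApply0 {n : ℕ} (R0 : Measure E) (K : E → Measure E) (𝓜 : FK E n) : FK E n where
  init := R0
  M := fun p => if p = 1 then kcomp (twist K (𝓜.G 0)) (𝓜.M 1) else 𝓜.M p
  G := fun p => if p = 0 then kap K (𝓜.G 0) else 𝓜.G p

/-- A knotset `(R_{0:n-1}, K_{0:n-1})`: `n` knots `(p, R_p, K_p)`, `p ∈ [0,n-1]`,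
where `R_0` is a probability measure (recorded in `R0`). -/
structure Knotset (E : Type*) [MeasurableSpace E] (n : ℕ) where
  R0 : Measure E
  R : ℕ → E → Measure E
  K : ℕ → E → Measure E

namespace Knotset

variable {n : ℕ}

/-- Regularity of a knotset: its constituents are (probability) Markov kernels. -/
def Reg (𝓚 : Knotset E n) : Prop :=
  IsProbabilityMeasure 𝓚.R0 ∧
  (∀ p, 1 ≤ p → p < n → IsKernel (𝓚.R p)) ∧
  (∀ p, p < n → IsKernel (𝓚.K p))

/-- Compatibility of a knotset with a model: `R_p K_p = M_p` for every `p ∈ [0,n-1]`. -/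
def Compat (𝓚 : Knotset E n) (𝓜 : FK E n) : Prop :=
  𝓚.R0.bind (𝓚.K 0) = 𝓜.init ∧
  ∀ p, 1 ≤ p → p < n → kcomp (𝓚.R p) (𝓚.K p) = 𝓜.M p

/-- The knot-model `K ∗ M` in closed form:
`M*_0 = R_0`, `G*_0 = K_0(G_0)`, `M*_p = K_{p-1}^{G_{p-1}} R_p`, `G*_p = K_p(G_p)` for
`p ∈ [1,n-1]`, `M*_n = K_{n-1}^{G_{n-1}} M_n` and `G*_n = G_n`. -/
def apply (𝓚 : Knotset E n) (𝓜 : FK E n) : FK E n where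
  init := 𝓚.R0
  M := fun p =>
    if p = 0 then 𝓜.M 0
    else if p < n then kcomp (twist (𝓚.K (p - 1)) (𝓜.G (p - 1))) (𝓚.R p)
    else if p = n then kcomp (twist (𝓚.K (n - 1)) (𝓜.G (n - 1))) (𝓜.M n)
    else 𝓜.M p
  G := fun p => if p < n then kap (𝓚.K p) (𝓜.G p) else 𝓜.G p

/-- The sequential application `K_t ∗ K_{t+1} ∗ ⋯ ∗ K_{n-1} ∗ M` of the knots of a
knotset at times `t, t+1, ..., n-1` (in descending time order), for `1 ≤ t`. -/
def applyFrom (𝓚 : Knotset E n) (𝓜 : FK E n) (t : ℕ) : FK E n :=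
  if _h : t < n then knotApply t (𝓚.R t) (𝓚.K t) (applyFrom 𝓚 𝓜 (t + 1))
  else 𝓜
termination_by n - t
decreasing_by omega

/-- The knotset operator defined as the sequential application
`K ∗ M = K_0 ∗ K_1 ∗ ⋯ ∗ K_{n-1} ∗ M` of its knots in descending time order. -/
def seqApply (𝓚 : Knotset E n) (𝓜 : FK E n) : FK E n :=
  knotApply0 𝓚.R0 (𝓚.K 0) (𝓚.applyFrom 𝓜 1)

end Knotset

/-- One application of a compatible knotset. -/
def KnotStep {n : ℕ} (𝓜' 𝓜 : FK E n) : Prop :=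
  ∃ 𝓚 : Knotset E n, 𝓚.Reg ∧ 𝓚.Compat 𝓜 ∧ 𝓜' = 𝓚.apply 𝓜

/-- The partial order on Feynman--Kac models induced by knotsets:
`M* ≼ M` iff `M* = K_m ∗ ⋯ ∗ K_1 ∗ M` for some finite sequence of compatible knotsets. -/
def KnotOrder {n : ℕ} (𝓜' 𝓜 : FK E n) : Prop :=
  Relation.TransGen KnotStep 𝓜' 𝓜

/-- The adapted knotset for a model `M`: the knot at time `p ≥ 1` is `(p, Id, M_p)`
and the knot at time `0` is `(0, δ_{x₀}, K_0)` with `K_0(x₀,·) = M_0`. -/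
def IsAdaptedKnotset {n : ℕ} (𝓚 : Knotset E n) (𝓜 : FK E n) : Prop :=
  (∃ x₀ : E, 𝓚.R0 = Measure.dirac x₀ ∧ 𝓚.K 0 x₀ = 𝓜.init) ∧
  (∀ p, 1 ≤ p → p < n →
    𝓚.R p = (fun x => Measure.dirac x) ∧ 𝓚.K p = 𝓜.M p)

/-- A Feynman--Kac model with horizon `n ≥ 1` whose terminal state space is the
product `E × E` (as arises from a `φ`-extension): terminal Markov kernel `Mn` and
terminal potential `Gn` are defined on the product space. -/
structure FKx (E : Type*) [MeasurableSpace E] (n : ℕ) where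
  init : Measure E
  M : ℕ → E → Measure E
  Mn : E → Measure (E × E)
  G : ℕ → E → ℝ≥0∞
  Gn : E × E → ℝ≥0∞

namespace FKx

variable {n : ℕ}

/-- Predictive measures `γ_p` for `p ≤ n-1`. -/
def gamma (𝓝 : FKx E n) : ℕ → Measure E
  | 0 => 𝓝.init
  | p + 1 => ((gamma 𝓝 p).withDensity (𝓝.G p)).bind (𝓝.M (p + 1))

/-- Updated measures `γ̂_p` for `p ≤ n-1`. -/
def gammaHat (𝓝 : FKx E n) (p : ℕ) : Measure E := (𝓝.gamma p).withDensity (𝓝.G p)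

/-- Normalised predictive measures `η_p` for `p ≤ n-1`. -/
def eta (𝓝 : FKx E n) (p : ℕ) : Measure E := ((𝓝.gamma p) Set.univ)⁻¹ • 𝓝.gamma p

/-- Normalised updated measures `η̂_p` for `p ≤ n-1`. -/
def etaHat (𝓝 : FKx E n) (p : ℕ) : Measure E := ((𝓝.gammaHat p) Set.univ)⁻¹ • 𝓝.gammaHat p

/-- Terminal predictive measure `γ_n` (on the product space). -/
def gammaN (𝓝 : FKx E n) : Measure (E × E) := (𝓝.gammaHat (n - 1)).bind 𝓝.Mn

/-- Terminal updated measure `γ̂_n`. -/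
def gammaHatN (𝓝 : FKx E n) : Measure (E × E) := 𝓝.gammaN.withDensity 𝓝.Gn

/-- Terminal normalised predictive measure `η_n`. -/
def etaN (𝓝 : FKx E n) : Measure (E × E) := (𝓝.gammaN Set.univ)⁻¹ • 𝓝.gammaN

/-- Terminal normalised updated measure `η̂_n`. -/
def etaHatN (𝓝 : FKx E n) : Measure (E × E) := (𝓝.gammaHatN Set.univ)⁻¹ • 𝓝.gammaHatN

/-- Kernels `Q_{p,n}` (into the terminal product space), for `p ≤ n-1`. -/
def Qto (𝓝 : FKx E n) (p : ℕ) : E → Measure (E × E) :=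
  if _h : n - 1 ≤ p then fun x => (𝓝.G (n - 1) x) • (𝓝.Mn x)
  else fun x => ((𝓝.G p x) • (𝓝.M (p + 1) x)).bind (Qto 𝓝 (p + 1))
termination_by n - 1 - p
decreasing_by omega

/-- `Q_{p,n}(φ)` for `p ≤ n-1`. -/
def Qf (𝓝 : FKx E n) (p : ℕ) (φ : E × E → ℝ) : E → ℝ := fun x => ∫ z, φ z ∂(𝓝.Qto p x)

/-- Asymptotic variance terms `v_{p,n}(φ)` (with `Q_{n,n} = Id`). -/
def v (𝓝 : FKx E n) (p : ℕ) (φ : E × E → ℝ) : ℝ≥0∞ :=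
  if p = n then
    𝓝.gammaN Set.univ * (∫⁻ z, ENNReal.ofReal ((φ z) ^ 2) ∂𝓝.gammaN)
        / (𝓝.gammaN Set.univ) ^ 2
      - ENNReal.ofReal ((∫ z, φ z ∂𝓝.etaN) ^ 2)
  else
    𝓝.gamma p Set.univ * (∫⁻ x, ENNReal.ofReal ((𝓝.Qf p φ x) ^ 2) ∂(𝓝.gamma p))
        / (𝓝.gammaN Set.univ) ^ 2
      - ENNReal.ofReal ((∫ z, φ z ∂𝓝.etaN) ^ 2)

/-- Updated asymptotic variance terms `v̂_{p,n}(φ) = v_{p,n}(G_n·φ)/η_n(G_n)²`. -/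
def vhat (𝓝 : FKx E n) (p : ℕ) (φ : E × E → ℝ) : ℝ≥0∞ :=
  𝓝.v p (fun z => (𝓝.Gn z).toReal * φ z)
    / ENNReal.ofReal ((∫ z, (𝓝.Gn z).toReal ∂𝓝.etaN) ^ 2)

/-- Updated asymptotic variance map `σ̂²(φ)`. -/
def varHat (𝓝 : FKx E n) (φ : E × E → ℝ) : ℝ≥0∞ := ∑ p ∈ Finset.range (n + 1), 𝓝.vhat p φ

/-- The class `F̂` of relevant test functions for the updated terminal measure. -/
def memFhat (𝓝 : FKx E n) (φ : E × E → ℝ) : Prop :=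
  Integrable φ 𝓝.etaHatN ∧ 𝓝.varHat φ ≠ ∞

end FKx

/-- The `φ`-extended model `M^φ` of a model `M`: the terminal kernel becomes
`M_n ⊗ Id` and the terminal potential becomes `(G_n·φ) ⊗ φ^{-1}`. -/
def FK.ext {n : ℕ} (𝓜 : FK E n) (φ : E → ℝ) : FKx E n where
  init := 𝓜.init
  M := 𝓜.M
  Mn := fun x => (𝓜.M n x).map (fun y => (y, y))
  G := 𝓜.G
  Gn := fun z => 𝓜.G n z.1 * ENNReal.ofReal (φ z.1) * (ENNReal.ofReal (φ z.2))⁻¹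

/-- Application of a standard knot `(t,R,K)`, `1 ≤ t < n`, to an extended model. -/
def knotApplyX {n : ℕ} (t : ℕ) (R K : E → Measure E) (𝓝 : FKx E n) : FKx E n where
  init := 𝓝.init
  M := fun p =>
    if p = t then R
    else if p = t + 1 then kcomp (twist K (𝓝.G t)) (𝓝.M (t + 1))
    else 𝓝.M p
  Mn := if t + 1 = n then kcomp (twist K (𝓝.G t)) 𝓝.Mn else 𝓝.Mn
  G := fun p => if p = t then kap K (𝓝.G t) else 𝓝.G p
  Gn := 𝓝.Gn

/-- Application of a standard knot `(0,R₀,K)` at time `0` to an extended model. -/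
def knotApplyX0 {n : ℕ} (R0 : Measure E) (K : E → Measure E) (𝓝 : FKx E n) : FKx E n where
  init := R0
  M := fun p => if p = 1 then kcomp (twist K (𝓝.G 0)) (𝓝.M 1) else 𝓝.M p
  Mn := if n = 1 then kcomp (twist K (𝓝.G 0)) 𝓝.Mn else 𝓝.Mn
  G := fun p => if p = 0 then kap K (𝓝.G 0) else 𝓝.G p
  Gn := 𝓝.Gn

/-- Application of a terminal knot `(n,R,K)` to an extended model, written with
respect to the decomposition `M_n = P_1 ⊗ P_2`, `G_n = H ⊗ φ^{-1}` (with `P_1 = RK`):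
`M*_n = R ⊗ K^H P_2` and `G*_n = K(H) ⊗ φ^{-1}`, all other components unchanged. -/
def termKnotApply {n : ℕ} (R K P2 : E → Measure E) (H : E → ℝ≥0∞) (φ : E → ℝ)
    (𝓝 : FKx E n) : FKx E n where
  init := 𝓝.init
  M := 𝓝.M
  Mn := ktens R (kcomp (twist K H) P2)
  G := 𝓝.G
  Gn := fun z => kap K H z.1 * (ENNReal.ofReal (φ z.2))⁻¹

/-- Terminal-knot model-compatibility of an extended model w.r.t. a reference
terminal potential `Gref` and target function `φ`: `M_n = U ⊗ V^{G_n·φ}` and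
`G_n = V(G_n·φ) ⊗ φ^{-1}` for some Markov kernels `U`, `V`. -/
def TermCompatible {n : ℕ} (𝓝 : FKx E n) (Gref : E → ℝ≥0∞) (φ : E → ℝ) : Prop :=
  ∃ U V : E → Measure E, IsKernel U ∧ IsKernel V ∧
    𝓝.Mn = ktens U (twist V (fun y => Gref y * ENNReal.ofReal (φ y))) ∧
    𝓝.Gn = fun z =>
      kap V (fun y => Gref y * ENNReal.ofReal (φ y)) z.1 * (ENNReal.ofReal (φ z.2))⁻¹

/-- One application of a (standard or terminal) knot to an extended model, relative to
a reference terminal potential `Gref` and target function `φ`. -/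
def XStep {n : ℕ} (Gref : E → ℝ≥0∞) (φ : E → ℝ) (𝓝' 𝓝 : FKx E n) : Prop :=
  (∃ (R0 : Measure E) (K : E → Measure E), IsProbabilityMeasure R0 ∧ IsKernel K ∧
      R0.bind K = 𝓝.init ∧ 𝓝' = knotApplyX0 R0 K 𝓝) ∨
  (∃ (t : ℕ) (R K : E → Measure E), 1 ≤ t ∧ t < n ∧ IsKernel R ∧ IsKernel K ∧
      kcomp R K = 𝓝.M t ∧ 𝓝' = knotApplyX t R K 𝓝) ∨
  (∃ R K U V : E → Measure E, IsKernel R ∧ IsKernel K ∧ IsKernel U ∧ IsKernel V ∧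
      𝓝.Mn = ktens U (twist V (fun y => Gref y * ENNReal.ofReal (φ y))) ∧
      𝓝.Gn = (fun z =>
        kap V (fun y => Gref y * ENNReal.ofReal (φ y)) z.1 * (ENNReal.ofReal (φ z.2))⁻¹) ∧
      kcomp R K = U ∧
      𝓝' = termKnotApply R K (twist V (fun y => Gref y * ENNReal.ofReal (φ y)))
              (kap V (fun y => Gref y * ENNReal.ofReal (φ y))) φ 𝓝)

/-- A finite (nonempty) sequence of (standard or terminal) knot applications. -/
def XChain {n : ℕ} (Gref : E → ℝ≥0∞) (φ : E → ℝ) : FKx E n → FKx E n → Prop :=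
  Relation.TransGen (XStep Gref φ)

/-- The partial order `M* ≼_φ M°` with respect to a reference model `M`:
`M*` is obtained from `M°` by knots, and `M°` is obtained from `M^φ` by knots. -/
def XOrder {n : ℕ} (𝓜 : FK E n) (φ : E → ℝ) (𝓝' 𝓝 : FKx E n) : Prop :=
  XChain (𝓜.G n) φ 𝓝' 𝓝 ∧ XChain (𝓜.G n) φ 𝓝 (𝓜.ext φ)

end KnotsPaper

/- The knot at time `t` replaces `M_t` by `R_t` and `G_t` by `K_t(G_t)`, and twists `M_{t+1}`
into `K_t^{G_t} M_{t+1}`. Applying the knots in descending order, when the knot at time `p - 1`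
acts, `M_p` has already become `R_p` (for `p < n`) while `G_{p-1}` is still the original
potential, so `M*_p = K_{p-1}^{G_{p-1}} R_p`; no later knot touches `M_p` or `G_p` again. -/

namespace KnotsPaper

namespace Knotset

variable {E : Type*} [MeasurableSpace E] {n : ℕ} (𝓚 : Knotset E n) (𝓜 : FK E n)

/-- Continuing `R` by `R_p := M_p` for `p ≥ n` (a trivial knot `(n, M_n, Id)` at the horizon)
makes `M*_p = K_{p-1}^{G_{p-1}} R_p` hold uniformly for `1 ≤ p ≤ n`. -/
def extR (p : ℕ) : E → Measure E := if p < n then 𝓚.R p else 𝓜.M p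

theorem applyFrom_of_lt {t : ℕ} (ht : t < n) :
    𝓚.applyFrom 𝓜 t = knotApply t (𝓚.R t) (𝓚.K t) (𝓚.applyFrom 𝓜 (t + 1)) := by
  rw [applyFrom, dif_pos ht]

theorem applyFrom_of_le {t : ℕ} (ht : n ≤ t) : 𝓚.applyFrom 𝓜 t = 𝓜 := by
  rw [applyFrom, dif_neg ht.not_gt]

theorem applyFrom_G (t p : ℕ) :
    (𝓚.applyFrom 𝓜 t).G p = if t ≤ p ∧ p < n then kap (𝓚.K p) (𝓜.G p) else 𝓜.G p := by
  rcases lt_or_ge t n with ht | ht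
  · rw [applyFrom_of_lt _ _ ht]
    simp only [knotApply, applyFrom_G (t + 1)]
    split_ifs <;> first | rfl | omega | (subst_vars; rfl)
  · rw [applyFrom_of_le _ _ ht, if_neg (by omega)]
termination_by n - t

theorem applyFrom_M (t p : ℕ) :
    (𝓚.applyFrom 𝓜 t).M p =
      if p < t ∨ n < p then 𝓜.M p
      else if p = t then 𝓚.extR 𝓜 p
      else kcomp (twist (𝓚.K (p - 1)) (𝓜.G (p - 1))) (𝓚.extR 𝓜 p) := by
  rcases lt_or_ge t n with ht | ht
  · rw [applyFrom_of_lt _ _ ht]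
    simp only [knotApply, applyFrom_G, applyFrom_M (t + 1), extR]
    split_ifs <;> first | rfl | omega | (subst_vars; simp)
  · rw [applyFrom_of_le _ _ ht, extR]
    split_ifs <;> first | rfl | omega
termination_by n - t

theorem seqApply_eq_apply (hn : 1 ≤ n) : 𝓚.seqApply 𝓜 = 𝓚.apply 𝓜 := by
  simp only [seqApply, apply, knotApply0, applyFrom_G, applyFrom_M, extR]
  congr 1
  · funext p
    split_ifs <;> first | rfl | omega | (subst_vars; simp)
  · funext p
    split_ifs <;> first | rfl | omega | (subst_vars; rfl)

end Knotset

theorem statement0_general {E : Type*} [MeasurableSpace E] {n : ℕ} (hn : 1 ≤ n)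
    (𝓜 : FK E n) (𝓚 : Knotset E n) :
    (𝓚.seqApply 𝓜).init = 𝓚.R0 ∧
    (𝓚.seqApply 𝓜).G 0 = kap (𝓚.K 0) (𝓜.G 0) ∧
    (∀ p, 1 ≤ p → p ≤ n - 1 →
      (𝓚.seqApply 𝓜).M p = kcomp (twist (𝓚.K (p - 1)) (𝓜.G (p - 1))) (𝓚.R p) ∧
      (𝓚.seqApply 𝓜).G p = kap (𝓚.K p) (𝓜.G p)) ∧
    (𝓚.seqApply 𝓜).M n = kcomp (twist (𝓚.K (n - 1)) (𝓜.G (n - 1))) (𝓜.M n) ∧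
    (𝓚.seqApply 𝓜).G n = 𝓜.G n := by
  rw [𝓚.seqApply_eq_apply 𝓜 hn]
  refine ⟨rfl, if_pos hn, fun p hp hpn => ⟨?_, if_pos (by omega)⟩, ?_, if_neg (lt_irrefl n)⟩
  · simp only [Knotset.apply, if_neg (show p ≠ 0 by omega), if_pos (show p < n by omega)]
  · simp only [Knotset.apply, if_neg (show n ≠ 0 by omega), lt_irrefl, if_false, if_true]

/-- Proposition 3.1, knot-model closed form: applying the knots of a
compatible knotset in descending time order yields the model with
`M*_0 = R_0`, `G*_0 = K_0(G_0)`, `M*_p = K_{p-1}^{G_{p-1}} R_p`, `G*_p = K_p(G_p)` for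
`p ∈ {1,…,n-1}`, `M*_n = K_{n-1}^{G_{n-1}} M_n` and `G*_n = G_n`. -/
theorem statement0 {E : Type*} [MeasurableSpace E] {n : ℕ} (hn : 1 ≤ n)
    (𝓜 : FK E n) (𝓚 : Knotset E n)
    (h𝓜 : 𝓜.Reg) (h𝓚 : 𝓚.Reg) (hcompat : 𝓚.Compat 𝓜) :
    (𝓚.seqApply 𝓜).init = 𝓚.R0 ∧
    (𝓚.seqApply 𝓜).G 0 = kap (𝓚.K 0) (𝓜.G 0) ∧
    (∀ p, 1 ≤ p → p ≤ n - 1 →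
      (𝓚.seqApply 𝓜).M p = kcomp (twist (𝓚.K (p - 1)) (𝓜.G (p - 1))) (𝓚.R p) ∧
      (𝓚.seqApply 𝓜).G p = kap (𝓚.K p) (𝓜.G p)) ∧
    (𝓚.seqApply 𝓜).M n = kcomp (twist (𝓚.K (n - 1)) (𝓜.G (n - 1))) (𝓜.M n) ∧
    (𝓚.seqApply 𝓜).G n = 𝓜.G n :=
  statement0_general hn 𝓜 𝓚

end KnotsPaper
end
end

section
/- Let K = (R_{0:n-1}, K_{0:n-1}) be a knotset compatible with a Feynman–Kac model M, and let M* = K ∗ M with predictive marginal measures γ*_p. Then for every measurable φ: (1) γ*_0(φ) = R_0(φ) and γ*_p(φ) = (γ̂_{p-1} R_p)(φ) for p ∈ {1,…,n−1}; (2) (γ*_p K_p)(φ) = γ_p(φ) for p ∈ {0,…,n−1}, where γ_p and γ̂_p are the predictive and updated measures of M. -/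
open MeasureTheory
open scoped ENNReal

noncomputable section

/-! The twisting identity `(μ · K(H)) K^H = (μK) · H` rewrites
`γ*_{p+1} = (γ*_p · K_p(G_p)) K_p^{G_p} R_{p+1}` as `(γ*_p K_p · G_p) R_{p+1}`, so (2) propagates
along `p` through `R_{p+1} K_{p+1} = M_{p+1}`, and (1) follows from (2). The identity needs
`K_p(G_p) < ∞` `γ*_p`-a.e.; this holds because `γ*_p` is a mixture of the measures `R_p(x, ·)`
and `R_p(K_p(G_p))(x) = M_p(G_p)(x) < ∞`. -/

namespace KnotsPaper

section Kernels

variable {α β : Type*} [MeasurableSpace α] [MeasurableSpace β]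

lemma measurable_kap {K : α → Measure β} {H : β → ℝ≥0∞}
    (hK : Measurable K) (hH : Measurable H) : Measurable (kap K H) :=
  (Measure.measurable_lintegral hH).comp hK

lemma measurable_twist {K : α → Measure β} {H : β → ℝ≥0∞}
    (hK : Measurable K) (hH : Measurable H) : Measurable (twist K H) := by
  refine Measurable.ite ((measurable_kap hK hH) (measurableSet_singleton 0)) hK ?_
  refine Measure.measurable_of_measurable_coe _ fun s hs => ?_
  have hdens : Measurable fun x => (K x).withDensity H s := by
    simp_rw [withDensity_apply _ hs, ← lintegral_indicator hs]
    exact (Measure.measurable_lintegral (hH.indicator hs)).comp hK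
  have hscaled : Measurable fun x => (kap K H x)⁻¹ * (K x).withDensity H s :=
    (measurable_kap hK hH).inv.mul hdens
  simpa only [Measure.smul_apply, smul_eq_mul] using hscaled

lemma ae_kap_ne_top {μ : Measure α} {K : α → Measure β} {H : β → ℝ≥0∞}
    (hK : Measurable K) (hH : Measurable H) (h : ∫⁻ y, H y ∂μ.bind K ≠ ∞) :
    ∀ᵐ x ∂μ, kap K H x ≠ ∞ := by
  rw [Measure.lintegral_bind hK.aemeasurable hH.aemeasurable] at h
  exact (ae_lt_top (measurable_kap hK hH) h).mono fun _ => ne_of_lt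

lemma ae_bind_of_forall_ae {μ : Measure α} {K : α → Measure β} {P : β → Prop}
    (hP : MeasurableSet {y | P y}) (h : ∀ x, ∀ᵐ y ∂K x, P y) : ∀ᵐ y ∂μ.bind K, P y := by
  rw [ae_iff]
  refine le_antisymm ?_ zero_le
  calc μ.bind K {y | ¬P y} ≤ ∫⁻ x, K x {y | ¬P y} ∂μ := Measure.bind_apply_le K hP.compl
    _ = ∫⁻ _, 0 ∂μ := lintegral_congr fun x => ae_iff.mp (h x)
    _ = 0 := lintegral_zero

lemma withDensity_kap_bind_twist {μ : Measure α} {K : α → Measure β} {H : β → ℝ≥0∞}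
    (hK : Measurable K) (hH : Measurable H) (hfin : ∀ᵐ x ∂μ, kap K H x ≠ ∞) :
    (μ.withDensity (kap K H)).bind (twist K H) = (μ.bind K).withDensity H := by
  ext s hs
  have htwist : Measurable fun x => twist K H x s :=
    (Measure.measurable_coe hs).comp (measurable_twist hK hH)
  rw [Measure.bind_apply hs (measurable_twist hK hH).aemeasurable,
    lintegral_withDensity_eq_lintegral_mul _ (measurable_kap hK hH) htwist,
    withDensity_apply _ hs, ← lintegral_indicator hs,
    Measure.lintegral_bind hK.aemeasurable (hH.indicator hs).aemeasurable]
  refine lintegral_congr_ae (hfin.mono fun x hx => ?_)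
  have hrestr : (K x).withDensity H s = ∫⁻ y, s.indicator H y ∂K x := by
    rw [withDensity_apply _ hs, lintegral_indicator hs]
  simp only [Pi.mul_apply, twist]
  split_ifs with h0
  · rw [h0, zero_mul, eq_comm, ← nonpos_iff_eq_zero, ← h0]
    exact lintegral_mono fun y => Set.indicator_le_self s H y
  · rw [Measure.smul_apply, smul_eq_mul, hrestr, ← mul_assoc, ENNReal.mul_inv_cancel h0 hx,
      one_mul]

end Kernels

namespace Knotset

variable {E : Type*} [MeasurableSpace E] {n : ℕ}

lemma gamma_apply_succ_eq_bind {𝓜 : FK E n} {𝓚 : Knotset E n} {p : ℕ} (hp : p + 1 < n)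
    (hK : Measurable (𝓚.K p)) (hG : Measurable (𝓜.G p)) (hR : Measurable (𝓚.R (p + 1))) :
    (𝓚.apply 𝓜).gamma (p + 1) =
      ((((𝓚.apply 𝓜).gamma p).withDensity (kap (𝓚.K p) (𝓜.G p))).bind
        (twist (𝓚.K p) (𝓜.G p))).bind (𝓚.R (p + 1)) := by
  have hGstar : (𝓚.apply 𝓜).G p = kap (𝓚.K p) (𝓜.G p) := if_pos (by omega)
  have hMstar : (𝓚.apply 𝓜).M (p + 1) = kcomp (twist (𝓚.K p) (𝓜.G p)) (𝓚.R (p + 1)) := by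
    simp [Knotset.apply, hp]
  rw [Measure.bind_bind (measurable_twist hK hG).aemeasurable hR.aemeasurable]
  change (((𝓚.apply 𝓜).gamma p).withDensity ((𝓚.apply 𝓜).G p)).bind
    ((𝓚.apply 𝓜).M (p + 1)) = _
  rw [hGstar, hMstar]
  rfl

lemma ae_kap_ne_top_gamma_apply {𝓜 : FK E n} {𝓚 : Knotset E n}
    (h𝓜 : 𝓜.Reg) (h𝓚 : 𝓚.Reg) (hcompat : 𝓚.Compat 𝓜) {p : ℕ} (hp : p < n) :
    ∀ᵐ x ∂(𝓚.apply 𝓜).gamma p, kap (𝓚.K p) (𝓜.G p) x ≠ ∞ := by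
  have hK : Measurable (𝓚.K p) := (h𝓚.2.2 p hp).1
  have hG : Measurable (𝓜.G p) := h𝓜.2.2.1 p hp.le
  cases p with
  | zero =>
    refine ae_kap_ne_top (μ := 𝓚.R0) hK hG ?_
    rw [hcompat.1]
    exact h𝓜.2.2.2.2.1
  | succ q =>
    rw [gamma_apply_succ_eq_bind hp (h𝓚.2.2 q (by omega)).1 (h𝓜.2.2.1 q (by omega))
      (h𝓚.2.1 _ (by omega) hp).1]
    refine ae_bind_of_forall_ae ((measurable_kap hK hG) (measurableSet_singleton ∞)).compl
      fun x => ae_kap_ne_top hK hG ?_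
    change kap (kcomp (𝓚.R (q + 1)) (𝓚.K (q + 1))) (𝓜.G (q + 1)) x ≠ ∞
    rw [hcompat.2 _ (by omega) hp]
    exact h𝓜.2.2.2.2.2 _ x (by omega) hp.le

lemma gamma_apply_succ {𝓜 : FK E n} {𝓚 : Knotset E n}
    (h𝓜 : 𝓜.Reg) (h𝓚 : 𝓚.Reg) (hcompat : 𝓚.Compat 𝓜) {p : ℕ} (hp : p + 1 < n) :
    (𝓚.apply 𝓜).gamma (p + 1) =
      ((((𝓚.apply 𝓜).gamma p).bind (𝓚.K p)).withDensity (𝓜.G p)).bind (𝓚.R (p + 1)) := by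
  have hK : Measurable (𝓚.K p) := (h𝓚.2.2 p (by omega)).1
  have hG : Measurable (𝓜.G p) := h𝓜.2.2.1 p (by omega)
  rw [gamma_apply_succ_eq_bind hp hK hG (h𝓚.2.1 _ (by omega) hp).1,
    withDensity_kap_bind_twist hK hG (ae_kap_ne_top_gamma_apply h𝓜 h𝓚 hcompat (by omega))]

lemma gamma_apply_bind_K {𝓜 : FK E n} {𝓚 : Knotset E n}
    (h𝓜 : 𝓜.Reg) (h𝓚 : 𝓚.Reg) (hcompat : 𝓚.Compat 𝓜) {p : ℕ} (hp : p < n) :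
    ((𝓚.apply 𝓜).gamma p).bind (𝓚.K p) = 𝓜.gamma p := by
  induction p with
  | zero => exact hcompat.1
  | succ q ih =>
    rw [gamma_apply_succ h𝓜 h𝓚 hcompat hp, ih (by omega),
      Measure.bind_bind (h𝓚.2.1 _ (by omega) hp).1.aemeasurable (h𝓚.2.2 _ hp).1.aemeasurable]
    exact congrArg _ (hcompat.2 _ (by omega) hp)

lemma gamma_apply_succ_eq_gammaHat_bind {𝓜 : FK E n} {𝓚 : Knotset E n}
    (h𝓜 : 𝓜.Reg) (h𝓚 : 𝓚.Reg) (hcompat : 𝓚.Compat 𝓜) {p : ℕ} (hp : p + 1 < n) :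
    (𝓚.apply 𝓜).gamma (p + 1) = (𝓜.gammaHat p).bind (𝓚.R (p + 1)) := by
  rw [gamma_apply_succ h𝓜 h𝓚 hcompat hp, gamma_apply_bind_K h𝓜 h𝓚 hcompat (by omega)]
  rfl

end Knotset

/-- Proposition 3.2, knot-model predictive measures: for a knotset
`K` compatible with `M` and `M* = K ∗ M`, for every measurable `φ`:
(1) `γ*_0(φ) = R_0(φ)` and `γ*_p(φ) = (γ̂_{p-1} R_p)(φ)` for `p ∈ {1,…,n-1}`;
(2) `(γ*_p K_p)(φ) = γ_p(φ)` for `p ∈ {0,…,n-1}`. -/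
theorem statement1 {E : Type*} [MeasurableSpace E] {n : ℕ} (hn : 1 ≤ n)
    (𝓜 : FK E n) (𝓚 : Knotset E n)
    (h𝓜 : 𝓜.Reg) (h𝓚 : 𝓚.Reg) (hcompat : 𝓚.Compat 𝓜) :
    ∀ φ : E → ℝ≥0∞, Measurable φ →
      ((∫⁻ x, φ x ∂((𝓚.apply 𝓜).gamma 0) = ∫⁻ x, φ x ∂𝓚.R0) ∧
       (∀ p, 1 ≤ p → p ≤ n - 1 →
         ∫⁻ x, φ x ∂((𝓚.apply 𝓜).gamma p)
           = ∫⁻ x, φ x ∂((𝓜.gammaHat (p - 1)).bind (𝓚.R p)))) ∧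
      (∀ p, p ≤ n - 1 →
         ∫⁻ x, φ x ∂(((𝓚.apply 𝓜).gamma p).bind (𝓚.K p)) = ∫⁻ x, φ x ∂(𝓜.gamma p)) := by
  intro φ _
  refine ⟨⟨rfl, fun p hp1 hp => ?_⟩, fun p hp => ?_⟩
  · obtain ⟨q, rfl⟩ : ∃ q, p = q + 1 := ⟨p - 1, by omega⟩
    rw [Knotset.gamma_apply_succ_eq_gammaHat_bind h𝓜 h𝓚 hcompat (by omega),
      Nat.add_sub_cancel]
  · rw [Knotset.gamma_apply_bind_K h𝓜 h𝓚 hcompat (by omega)]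

end KnotsPaper
end
end
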